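/- Let k be an algebraically closed field of characteristic 0, let h ∈ k[x] be a monic polynomial of odd degree 2m+1 ≥ 3 with h and h′ coprime, and let A = k[x, y]/⟨y² − 2h(x)⟩. Then for every non-zero η ∈ Der_k(A), the centralizer of η in Der_k(A) is one-dimensional: if ν ∈ Der_k(A) satisfies [η, ν] = 0, then ν = λ·η for some λ ∈ k (i.e., Ker ad(η) = k·η). -/

import Mathlib

/-!
Every derivation `η` of `A = k[x, y]/(y² - 2h)` is `f • D` for the Hamiltonian field
`D = y ∂ₓ + h' ∂_y`: differentiating `y² = 2h` gives `y η(y) = h' η(x)`, and the Bézout relation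
`u h + v h' = 1` lets one divide by the "Jacobian" `(y, h')`. Since
`⁅f • D, g • D⁆ = (f D g - g D f) • D`, commuting with `f • D` means that `g / f` is a constant of
`D`. Multiplying numerator and denominator by the conjugate of `f` (under `y ↦ -y`) gives
`g / f = (M + W y) / N` with `M, W, N ∈ k[x]`, and `D` of this vanishes iff both `M / N` and
`h W² / N²` are constant in `k(x)`. As `deg h` is odd, `h W²` is never a constant times a square
unless `W = 0`; hence `g / f = M / N ∈ k`.
-/

open Polynomial

noncomputable section

namespace Polynomial

theorem eq_zero_of_mul_sq_eq_C_mul_sq {R : Type*} [CommRing R] [IsDomain R] {f a b : R[X]}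
    {c : R} (hf : Odd f.natDegree) (h : f * b ^ 2 = C c * a ^ 2) : b = 0 := by
  have hf0 : f ≠ 0 := by rintro rfl; simp at hf
  by_contra hb
  have hc : c ≠ 0 := by
    rintro rfl
    simp [hf0, hb] at h
  have ha : a ≠ 0 := by
    rintro rfl
    simp [hf0, hb] at h
  have hdeg := congrArg natDegree h
  rw [natDegree_mul hf0 (pow_ne_zero 2 hb), natDegree_C_mul hc, natDegree_pow,
    natDegree_pow] at hdeg
  obtain ⟨n, hn⟩ := hf
  omega

variable {k : Type*} [Field k] [CharZero k]

theorem exists_eq_C_mul_of_wronskian_eq_zero {a b : k[X]} (hb : b ≠ 0)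
    (hw : wronskian b a = 0) : ∃ c : k, a = C c * b := by
  obtain ⟨a', b', d, hrel, rfl, rfl⟩ := UniqueFactorizationMonoid.exists_reduced_factors' a b hb
  have hd : d ≠ 0 := left_ne_zero_of_mul hb
  have hw' : d ^ 2 * wronskian b' a' = 0 := by
    simp only [wronskian, derivative_mul] at hw ⊢
    linear_combination hw
  obtain ⟨hb', ha'⟩ := (isRelPrime_iff_isCoprime.mp hrel.symm).wronskian_eq_zero_iff.mp
    ((mul_eq_zero.mp hw').resolve_left (pow_ne_zero 2 hd))
  rw [eq_C_of_derivative_eq_zero hb'] at hb ⊢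
  rw [eq_C_of_derivative_eq_zero ha']
  have hb0 : b'.coeff 0 ≠ 0 := by simpa using right_ne_zero_of_mul hb
  exact ⟨a'.coeff 0 / b'.coeff 0, by rw [← mul_left_comm, ← C_mul, div_mul_cancel₀ _ hb0]⟩

theorem eq_zero_of_wronskian_sq_mul_sq_eq_zero {f a b : k[X]} (hf : Odd f.natDegree)
    (ha : a ≠ 0) (hw : wronskian (a ^ 2) (f * b ^ 2) = 0) : b = 0 :=
  have ⟨_, hc⟩ := exists_eq_C_mul_of_wronskian_eq_zero (pow_ne_zero 2 ha) hw
  eq_zero_of_mul_sq_eq_C_mul_sq hf hc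

end Polynomial

namespace Derivation

variable {R A B : Type*} [CommRing R] [CommRing A] [CommRing B] [Algebra R A] [Algebra R B]

theorem commutator_smul_smul (D : Derivation R A A) (f g : A) :
    ⁅f • D, g • D⁆ = (f * D g - g * D f) • D := by
  ext a
  simp only [commutator_apply, smul_apply, smul_eq_mul, leibniz]
  ring

def mapAlgEquiv (e : A ≃ₐ[R] B) (D : Derivation R A A) : Derivation R B B :=
  mk' (e.toLinearMap ∘ₗ D.toLinearMap ∘ₗ e.symm.toLinearMap) fun a b => by simp [leibniz]

@[simp]
theorem mapAlgEquiv_apply (e : A ≃ₐ[R] B) (D : Derivation R A A) (b : B) :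
    mapAlgEquiv e D b = e (D (e.symm b)) :=
  rfl

def lieEquivOfAlgEquiv (e : A ≃ₐ[R] B) : Derivation R A A ≃ₗ⁅R⁆ Derivation R B B where
  toFun := mapAlgEquiv e
  map_add' _ _ := by ext; simp
  map_smul' _ _ := by ext; simp
  map_lie' := by intros; ext; simp [commutator_apply]
  invFun := mapAlgEquiv e.symm
  left_inv _ := by ext; simp
  right_inv _ := by ext; simp

end Derivation

namespace Hyperelliptic

variable {k : Type*} [Field k] (h : k[X])

def equation : k[X][X] := X ^ 2 - C (2 * h)

theorem monic_equation : (equation h).Monic :=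
  monic_X_pow_sub (degree_C_le.trans_lt (by norm_num))

theorem degree_equation : (equation h).degree = 2 :=
  degree_X_pow_sub_C (by norm_num) _

abbrev CoordRing := AdjoinRoot (equation h)

abbrev ofPoly : k[X] →+* CoordRing h := AdjoinRoot.of (equation h)

def y : CoordRing h := AdjoinRoot.root (equation h)

theorem y_sq : y h ^ 2 = 2 * ofPoly h h := by
  rw [← map_ofNat (ofPoly h), ← map_mul, ← sub_eq_zero, y, ← AdjoinRoot.mk_X, ← AdjoinRoot.mk_C,
    ← map_pow, ← map_sub]
  exact AdjoinRoot.mk_self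

/-- Coordinates in the `k[X]`-basis `1, y`. -/
def coord (i : ℕ) : CoordRing h →ₗ[k[X]] k[X] :=
  (lcoeff k[X] i).comp (AdjoinRoot.modByMonicHom (monic_equation h))

theorem modByMonicHom_ofPoly_add_mul_y (p q : k[X]) :
    AdjoinRoot.modByMonicHom (monic_equation h) (ofPoly h p + ofPoly h q * y h) =
      C q * X + C p := by
  have hmk : AdjoinRoot.mk (equation h) (C q * X + C p) = ofPoly h p + ofPoly h q * y h := by
    simp [y, add_comm]
  rw [← hmk, AdjoinRoot.modByMonicHom_mk, modByMonic_eq_self_iff (monic_equation h),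
    degree_equation]
  exact degree_linear_lt

@[simp]
theorem coord_zero (p q : k[X]) : coord h 0 (ofPoly h p + ofPoly h q * y h) = p := by
  rw [coord, LinearMap.comp_apply, modByMonicHom_ofPoly_add_mul_y, lcoeff_apply]
  simp

@[simp]
theorem coord_one (p q : k[X]) : coord h 1 (ofPoly h p + ofPoly h q * y h) = q := by
  rw [coord, LinearMap.comp_apply, modByMonicHom_ofPoly_add_mul_y, lcoeff_apply]
  simp

theorem ofPoly_coord_add_mul_y (b : CoordRing h) :
    ofPoly h (coord h 0 b) + ofPoly h (coord h 1 b) * y h = b := by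
  have hdeg : (AdjoinRoot.modByMonicHom (monic_equation h) b).degree ≤ 1 := by
    obtain ⟨G, rfl⟩ := AdjoinRoot.mk_surjective b
    rw [AdjoinRoot.modByMonicHom_mk, ← Order.lt_succ_iff]
    convert degree_modByMonic_lt G (monic_equation h)
    exact (degree_equation h).symm
  conv_rhs =>
    rw [← AdjoinRoot.mk_leftInverse (monic_equation h) b, eq_X_add_C_of_degree_le_one hdeg]
  simp [y, coord, add_comm]

theorem exists_eq_ofPoly_add_mul_y (b : CoordRing h) : ∃ p q, b = ofPoly h p + ofPoly h q * y h :=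
  ⟨_, _, (ofPoly_coord_add_mul_y h b).symm⟩

theorem ofPoly_add_mul_y_inj {p q r s : k[X]} :
    ofPoly h p + ofPoly h q * y h = ofPoly h r + ofPoly h s * y h ↔ p = r ∧ q = s := by
  refine ⟨fun he => ⟨?_, ?_⟩, fun ⟨hp, hq⟩ => hp ▸ hq ▸ rfl⟩
  · simpa only [coord_zero] using congrArg (coord h 0) he
  · simpa only [coord_one] using congrArg (coord h 1) he

theorem y_ne_zero : y h ≠ 0 := by
  simpa using (ofPoly_add_mul_y_inj h (p := 0) (q := 1) (r := 0) (s := 0)).not.mpr (by simp)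

theorem ofPoly_add_mul_y_mul (p q r s : k[X]) :
    (ofPoly h p + ofPoly h q * y h) * (ofPoly h r + ofPoly h s * y h) =
      ofPoly h (p * r + 2 * h * (q * s)) + ofPoly h (p * s + q * r) * y h := by
  simp only [map_add, map_mul, map_ofNat]
  linear_combination (ofPoly h q * ofPoly h s) * y_sq h

theorem ofPoly_add_mul_y_add (p q r s : k[X]) :
    (ofPoly h p + ofPoly h q * y h) + (ofPoly h r + ofPoly h s * y h) =
      ofPoly h (p + r) + ofPoly h (q + s) * y h := by
  simp only [map_add]
  ring

theorem smul_eq_ofPoly_C_mul (l : k) (b : CoordRing h) : l • b = ofPoly h (C l) * b := by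
  rw [← algebraMap_smul k[X] l b, Algebra.smul_def]
  rfl

theorem ofPoly_mul_eq_zero {N : k[X]} (hN : N ≠ 0) {b : CoordRing h} (hb : ofPoly h N * b = 0) :
    b = 0 := by
  obtain ⟨p, q, rfl⟩ := exists_eq_ofPoly_add_mul_y h b
  have hNb : ofPoly h (N * p) + ofPoly h (N * q) * y h = ofPoly h 0 + ofPoly h 0 * y h := by
    simp only [map_mul, map_zero, zero_mul, add_zero]
    linear_combination hb
  obtain ⟨hp, hq⟩ := (ofPoly_add_mul_y_inj h).mp hNb
  simp [(mul_eq_zero.mp hp).resolve_left hN, (mul_eq_zero.mp hq).resolve_left hN]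

/-- The Hamiltonian vector field `y ∂ₓ + h' ∂_y` of `y² / 2 - h`. -/
def hamiltonian : Derivation k (CoordRing h) (CoordRing h) where
  toFun b := ofPoly h (2 * h * derivative (coord h 1 b) + derivative h * coord h 1 b) +
    ofPoly h (derivative (coord h 0 b)) * y h
  map_add' a b := by
    simp only [map_add, mul_add, add_mul]
    ring
  map_smul' l b := by
    have hcoord (i : ℕ) : coord h i (l • b) = C l * coord h i b := by
      rw [← algebraMap_smul k[X] l b, map_smul, algebraMap_eq, smul_eq_mul]
    rw [RingHom.id_apply, hcoord, hcoord]
    simp only [derivative_C_mul, smul_eq_ofPoly_C_mul, map_add, map_mul]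
    ring
  map_one_eq_zero' := by
    have h1 : (1 : CoordRing h) = ofPoly h 1 + ofPoly h 0 * y h := by simp
    dsimp only [LinearMap.coe_mk, AddHom.coe_mk]
    rw [h1, coord_zero, coord_one]
    simp
  leibniz' a b := by
    obtain ⟨p, q, rfl⟩ := exists_eq_ofPoly_add_mul_y h a
    obtain ⟨r, s, rfl⟩ := exists_eq_ofPoly_add_mul_y h b
    dsimp only [LinearMap.coe_mk, AddHom.coe_mk]
    rw [ofPoly_add_mul_y_mul, coord_zero, coord_one, coord_zero, coord_one, coord_zero, coord_one,
      smul_eq_mul, smul_eq_mul, ofPoly_add_mul_y_mul, ofPoly_add_mul_y_mul, ofPoly_add_mul_y_add,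
      ofPoly_add_mul_y_inj]
    constructor <;>
    · simp only [derivative_add, derivative_mul, derivative_ofNat]
      ring

theorem hamiltonian_apply (p q : k[X]) :
    hamiltonian h (ofPoly h p + ofPoly h q * y h) =
      ofPoly h (2 * h * derivative q + derivative h * q) + ofPoly h (derivative p) * y h := by
  change ofPoly h _ + _ = _
  rw [coord_zero, coord_one]

theorem hamiltonian_ofPoly (p : k[X]) :
    hamiltonian h (ofPoly h p) = ofPoly h (derivative p) * y h := by
  simpa using hamiltonian_apply h p 0

theorem hamiltonian_y : hamiltonian h (y h) = ofPoly h (derivative h) := by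
  simpa using hamiltonian_apply h 0 1

theorem ofPoly_eq_aeval (p : k[X]) : ofPoly h p = aeval (ofPoly h X) p := by
  simpa using (aeval_algHom_apply (AdjoinRoot.ofAlgHom k (equation h)) X p).symm

theorem derivation_ofPoly (η : Derivation k (CoordRing h) (CoordRing h)) (p : k[X]) :
    η (ofPoly h p) = ofPoly h (derivative p) * η (ofPoly h X) := by
  rw [ofPoly_eq_aeval, Derivation.map_aeval, ← ofPoly_eq_aeval, smul_eq_mul]

theorem derivation_ext {η₁ η₂ : Derivation k (CoordRing h) (CoordRing h)}
    (hX : η₁ (ofPoly h X) = η₂ (ofPoly h X)) (hy : η₁ (y h) = η₂ (y h)) : η₁ = η₂ := by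
  ext b
  obtain ⟨p, q, rfl⟩ := exists_eq_ofPoly_add_mul_y h b
  rw [map_add, map_add, Derivation.leibniz, Derivation.leibniz, derivation_ofPoly _ η₁ p,
    derivation_ofPoly _ η₁ q, derivation_ofPoly _ η₂ p, derivation_ofPoly _ η₂ q, hX, hy]

variable (k) in
abbrev ideal : Ideal (MvPolynomial (Fin 2) k) :=
  Ideal.span {MvPolynomial.X 1 ^ 2 - 2 * Polynomial.aeval (MvPolynomial.X 0) h}

variable (k) in
abbrev QuotientRing : Type _ := MvPolynomial (Fin 2) k ⧸ ideal k h

def toCoordRing : QuotientRing k h →ₐ[k] CoordRing h :=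
  Ideal.Quotient.liftₐ _ (MvPolynomial.aeval ![ofPoly h X, y h]) fun a ha => by
    obtain ⟨c, rfl⟩ := Ideal.mem_span_singleton'.mp ha
    rw [map_mul, map_sub, map_mul, map_pow, ← aeval_algHom_apply]
    simp [← ofPoly_eq_aeval, y_sq]

theorem toCoordRing_mk_X (i : Fin 2) :
    toCoordRing h (Ideal.Quotient.mk _ (MvPolynomial.X i)) = ![ofPoly h X, y h] i :=
  MvPolynomial.aeval_X _ i

def ofCoordRing : CoordRing h →ₐ[k] QuotientRing k h :=
  AdjoinRoot.liftAlgHom (equation h) (aeval (Ideal.Quotient.mk _ (MvPolynomial.X 0)))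
    (Ideal.Quotient.mk _ (MvPolynomial.X 1)) (by
      have hmk := aeval_algHom_apply (Ideal.Quotient.mkₐ k (ideal k h)) (MvPolynomial.X 0) h
      simp only [Ideal.Quotient.mkₐ_eq_mk] at hmk
      rw [equation, eval₂_sub, eval₂_X_pow, eval₂_C, AlgHom.coe_toRingHom, map_mul, map_ofNat,
        hmk, ← map_pow, ← map_ofNat (Ideal.Quotient.mk _) 2, ← map_mul, ← map_sub,
        Ideal.Quotient.eq_zero_iff_mem]
      exact Ideal.mem_span_singleton_self _)

variable (k) in
def quotientAlgEquiv : QuotientRing k h ≃ₐ[k] CoordRing h :=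
  AlgEquiv.ofAlgHom (toCoordRing h) (ofCoordRing h)
    (by
      apply AdjoinRoot.algHom_ext'
      · ext
        simp [ofCoordRing, toCoordRing_mk_X]
      · simp [ofCoordRing, toCoordRing_mk_X, y])
    (by
      apply Ideal.Quotient.algHom_ext
      apply MvPolynomial.algHom_ext
      intro i
      fin_cases i
      · simp [toCoordRing_mk_X, ofCoordRing]
      · simp [toCoordRing_mk_X, ofCoordRing, y])

variable [CharZero k]

theorem y_mul_derivation_y (η : Derivation k (CoordRing h) (CoordRing h)) :
    y h * η (y h) = ofPoly h (derivative h) * η (ofPoly h X) := by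
  have h2 : (2 : CoordRing h) * (y h * η (y h)) =
      2 * (ofPoly h (derivative h) * η (ofPoly h X)) := by
    have hsq := congrArg η (y_sq h)
    rw [sq, Derivation.leibniz, ← map_ofNat (ofPoly h), ← map_mul, derivation_ofPoly,
      derivative_mul, derivative_ofNat, zero_mul, zero_add, map_mul, map_ofNat,
      smul_eq_mul] at hsq
    linear_combination hsq
  have hunit : IsUnit (2 : CoordRing h) := by
    have h2k := (isUnit_iff_ne_zero.mpr (two_ne_zero (α := k))).map (algebraMap k (CoordRing h))
    rwa [map_ofNat] at h2k
  exact hunit.mul_left_cancel h2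

theorem exists_eq_smul_hamiltonian (hcop : IsCoprime h (derivative h))
    (η : Derivation k (CoordRing h) (CoordRing h)) : ∃ f : CoordRing h, η = f • hamiltonian h := by
  obtain ⟨u, v, huv⟩ := hcop
  have hbezout :
      ofPoly h (C 2⁻¹ * u) * (2 * ofPoly h h) + ofPoly h v * ofPoly h (derivative h) = 1 := by
    have h2 : C (2⁻¹ : k) * 2 = 1 := by
      rw [← map_ofNat C 2, ← C_mul, inv_mul_cancel₀ two_ne_zero, C_1]
    have hpoly : C 2⁻¹ * u * (2 * h) + v * derivative h = 1 := by
      linear_combination huv + u * h * h2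
    simpa only [map_add, map_mul, map_ofNat, map_one] using congrArg (ofPoly h) hpoly
  have hη := y_mul_derivation_y h η
  refine ⟨ofPoly h (C 2⁻¹ * u) * y h * η (ofPoly h X) + ofPoly h v * η (y h),
    derivation_ext h ?_ ?_⟩
  · rw [Derivation.smul_apply, smul_eq_mul, hamiltonian_ofPoly, derivative_X, map_one, one_mul]
    linear_combination -(ofPoly h (C 2⁻¹ * u) * η (ofPoly h X)) * y_sq h - ofPoly h v * hη
      - η (ofPoly h X) * hbezout
  · rw [Derivation.smul_apply, smul_eq_mul, hamiltonian_y]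
    linear_combination (ofPoly h (C 2⁻¹ * u) * y h) * hη - η (y h) * hbezout
      - (ofPoly h (C 2⁻¹ * u) * η (y h)) * y_sq h

/-- `f'` is the conjugate of `f` under `y ↦ -y`, and `N` its norm. -/
theorem exists_mul_eq_ofPoly (hh : Odd h.natDegree) {f : CoordRing h} (hf : f ≠ 0) :
    ∃ f' N, N ≠ 0 ∧ f * f' = ofPoly h N := by
  obtain ⟨p, q, rfl⟩ := exists_eq_ofPoly_add_mul_y h f
  refine ⟨ofPoly h p + ofPoly h (-q) * y h, p ^ 2 - 2 * h * q ^ 2, fun hN => hf ?_, ?_⟩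
  · have h2h : Odd (2 * h).natDegree := by rwa [← C_ofNat, natDegree_C_mul two_ne_zero]
    have hq : q = 0 := eq_zero_of_mul_sq_eq_C_mul_sq (a := p) (c := 1) h2h
      (by rw [C_1, one_mul]; linear_combination -hN)
    have hp : p = 0 := by simpa [hq] using hN
    simp [hp, hq]
  · rw [ofPoly_add_mul_y_mul, show p * -q + q * p = 0 by ring, map_zero, zero_mul, add_zero]
    ring_nf

theorem isDomain (hh : Odd h.natDegree) : IsDomain (CoordRing h) := by
  have : Nontrivial (CoordRing h) :=
    ⟨⟨ofPoly h 1 + ofPoly h 0 * y h, ofPoly h 0 + ofPoly h 0 * y h, by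
      rw [Ne, ofPoly_add_mul_y_inj]; simp⟩⟩
  have : NoZeroDivisors (CoordRing h) := ⟨fun {a b} hab => or_iff_not_imp_left.mpr fun ha => by
    obtain ⟨a', N, hN, haN⟩ := exists_mul_eq_ofPoly h hh ha
    exact ofPoly_mul_eq_zero h hN (by rw [← haN]; linear_combination a' * hab)⟩
  exact NoZeroDivisors.to_isDomain _

theorem smul_hamiltonian_eq_zero_iff (hh : Odd h.natDegree) {f : CoordRing h} :
    f • hamiltonian h = 0 ↔ f = 0 := by
  have := isDomain h hh
  refine ⟨fun hf => ?_, fun hf => by rw [hf, zero_smul]⟩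
  simpa [hamiltonian_ofPoly, y_ne_zero] using congrArg (fun η => η (ofPoly h X)) hf

theorem exists_eq_smul_of_ofPoly_mul_hamiltonian_eq (hh : Odd h.natDegree) {N : k[X]}
    (hN : N ≠ 0) {G : CoordRing h}
    (hG : ofPoly h N * hamiltonian h G = G * hamiltonian h (ofPoly h N)) :
    ∃ c : k, G = c • ofPoly h N := by
  obtain ⟨M, W, rfl⟩ := exists_eq_ofPoly_add_mul_y h G
  have hlhs : ofPoly h N * hamiltonian h (ofPoly h M + ofPoly h W * y h) =
      ofPoly h (N * (2 * h * derivative W + derivative h * W)) +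
        ofPoly h (N * derivative M) * y h := by
    rw [hamiltonian_apply, map_mul, map_mul]
    ring
  have hrhs : (ofPoly h M + ofPoly h W * y h) * hamiltonian h (ofPoly h N) =
      ofPoly h (2 * h * (W * derivative N)) + ofPoly h (M * derivative N) * y h := by
    simp only [hamiltonian_ofPoly, map_mul, map_ofNat]
    linear_combination (ofPoly h W * ofPoly h (derivative N)) * y_sq h
  rw [hlhs, hrhs, ofPoly_add_mul_y_inj] at hG
  obtain ⟨hx, hy⟩ := hG
  -- `hx` says that `h W² / N²` is constant, `hy` that `M / N` is.
  have hW : W = 0 := eq_zero_of_wronskian_sq_mul_sq_eq_zero hh hN (by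
    simp only [wronskian, derivative_mul, derivative_pow, Nat.cast_ofNat, map_ofNat]
    linear_combination (N * W) * hx)
  obtain ⟨c, hc⟩ := exists_eq_C_mul_of_wronskian_eq_zero (a := M) hN (by
    rw [wronskian]; linear_combination hy)
  refine ⟨c, ?_⟩
  rw [hW, hc, smul_eq_ofPoly_C_mul, map_zero, zero_mul, add_zero, map_mul]

theorem exists_eq_smul_of_mul_hamiltonian_eq (hh : Odd h.natDegree) {f g : CoordRing h}
    (hf : f ≠ 0) (hfg : f * hamiltonian h g = g * hamiltonian h f) : ∃ c : k, g = c • f := by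
  have := isDomain h hh
  obtain ⟨f', N, hN, hfN⟩ := exists_mul_eq_ofPoly h hh hf
  obtain ⟨c, hc⟩ := exists_eq_smul_of_ofPoly_mul_hamiltonian_eq h hh hN (G := g * f') (by
    rw [← hfN, Derivation.leibniz, Derivation.leibniz, smul_eq_mul, smul_eq_mul, smul_eq_mul,
      smul_eq_mul]
    linear_combination f' ^ 2 * hfg)
  have hf' : f' ≠ 0 := by
    rintro rfl
    exact hN (AdjoinRoot.of.injective_of_degree_ne_zero (f := equation h)
      (by simp [degree_equation]) (by simpa using hfN.symm))
  refine ⟨c, mul_right_cancel₀ hf' ?_⟩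
  rw [hc, ← hfN, smul_mul_assoc]

theorem exists_eq_smul_of_lie_eq_zero (hh : Odd h.natDegree) (hcop : IsCoprime h (derivative h))
    {η ν : Derivation k (CoordRing h) (CoordRing h)} (hη : η ≠ 0) (hcomm : ⁅η, ν⁆ = 0) :
    ∃ l : k, ν = l • η := by
  obtain ⟨f, rfl⟩ := exists_eq_smul_hamiltonian h hcop η
  obtain ⟨g, rfl⟩ := exists_eq_smul_hamiltonian h hcop ν
  rw [Derivation.commutator_smul_smul, smul_hamiltonian_eq_zero_iff h hh, sub_eq_zero] at hcomm
  obtain ⟨l, rfl⟩ :=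
    exists_eq_smul_of_mul_hamiltonian_eq h hh (fun hf => hη (by rw [hf, zero_smul])) hcomm
  exact ⟨l, smul_assoc l f _⟩

end Hyperelliptic

end

theorem hyperelliptic_centralizer_one_dimensional_general
    (k : Type*) [Field k] [CharZero k]
    (m : ℕ)
    (h : Polynomial k) (hdeg : h.natDegree = 2 * m + 1)
    (hcop : IsCoprime h (Polynomial.derivative h))
    (I : Ideal (MvPolynomial (Fin 2) k))
    (hI : I = Ideal.span {MvPolynomial.X 1 ^ 2 -
      2 * Polynomial.aeval (MvPolynomial.X 0) h})
    (η ν : Derivation k (MvPolynomial (Fin 2) k ⧸ I) (MvPolynomial (Fin 2) k ⧸ I))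
    (hη : η ≠ 0) (hcomm : ⁅η, ν⁆ = 0) :
    ∃ l : k, ν = l • η := by
  subst hI
  let e := Derivation.lieEquivOfAlgEquiv (Hyperelliptic.quotientAlgEquiv k h)
  obtain ⟨l, hl⟩ := Hyperelliptic.exists_eq_smul_of_lie_eq_zero h ⟨m, hdeg⟩ hcop (ν := e ν)
    ((map_ne_zero_iff e (EquivLike.injective e)).mpr hη) (by rw [← e.map_lie, hcomm, map_zero])
  exact ⟨l, EquivLike.injective e (by rw [hl, map_smul])⟩

/-- On a non-singular hyperelliptic curve `y² = 2h(x)`, the centralizer of a non-zero vector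
field `η` in the Lie algebra of vector fields is `k·η`. -/
theorem hyperelliptic_centralizer_one_dimensional
    (k : Type*) [Field k] [IsAlgClosed k] [CharZero k]
    (m : ℕ) (hm : 1 ≤ m)
    (h : Polynomial k) (hmonic : h.Monic) (hdeg : h.natDegree = 2 * m + 1)
    (hcop : IsCoprime h (Polynomial.derivative h))
    (I : Ideal (MvPolynomial (Fin 2) k))
    (hI : I = Ideal.span {MvPolynomial.X 1 ^ 2 -
      2 * Polynomial.aeval (MvPolynomial.X 0) h})
    (η ν : Derivation k (MvPolynomial (Fin 2) k ⧸ I) (MvPolynomial (Fin 2) k ⧸ I))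
    (hη : η ≠ 0) (hcomm : ⁅η, ν⁆ = 0) :
    ∃ l : k, ν = l • η :=
  hyperelliptic_centralizer_one_dimensional_general k m h hdeg hcop I hI η ν hη hcomm
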